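/- Let F_q be a finite field, θ an automorphism of F_q, and C a linear code over F_q of length n. If the order of θ divides n, then C is a θ-cyclic code if and only if the skew polynomial representation C(X) of C is a left ideal of F_q[X;θ]/(X^n − 1). -/

import Mathlib

/-!
Skew polynomial rings `F[X;θ]` of automorphism type: the additive group of
polynomials `∑ aᵢ Xⁱ` with coefficients written on the left, with multiplication
determined by the rule `X * a = θ(a) * X`.
-/

noncomputable section

/-- The skew polynomial ring `F[X;θ]`: formal polynomials `∑ aᵢ Xⁱ` (represented by
their finitely supported coefficient functions) with the usual addition and with
multiplication twisted by the automorphism `θ`, so that `X * a = θ(a) * X`. -/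
def SkewPoly (F : Type*) [Ring F] (_θ : RingAut F) : Type _ := ℕ →₀ F

namespace SkewPoly

variable {F : Type*} [Ring F] (θ : RingAut F)

instance : AddCommGroup (SkewPoly F θ) := inferInstanceAs (AddCommGroup (ℕ →₀ F))

private theorem aut_one_apply (x : F) : (1 : RingAut F) x = x := rfl
private theorem aut_mul_apply (f g : RingAut F) (x : F) : (f * g) x = f (g x) := rfl

/-- The skew (twisted) convolution product on coefficient functions:
`(∑ aᵢ Xⁱ) * (∑ bⱼ Xʲ) = ∑_{i,j} aᵢ θⁱ(bⱼ) X^{i+j}`. -/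
def mulF (p q : ℕ →₀ F) : ℕ →₀ F :=
  p.sum fun i a => q.sum fun j b => Finsupp.single (i + j) (a * (θ ^ i) b)

instance : Mul (SkewPoly F θ) := ⟨fun p q => mulF θ p q⟩

instance : One (SkewPoly F θ) := ⟨(Finsupp.single 0 1 : ℕ →₀ F)⟩

theorem mul_def (p q : SkewPoly F θ) :
    p * q = Finsupp.sum (α := ℕ) (M := F) p
      (fun i a => Finsupp.sum (α := ℕ) (M := F) q
        (fun j b => Finsupp.single (i + j) (a * (θ ^ i) b))) := rfl

private theorem zero_mulF (q : ℕ →₀ F) : mulF θ 0 q = 0 := by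
  simp [mulF]

private theorem mulF_zero (p : ℕ →₀ F) : mulF θ p 0 = 0 := by
  simp [mulF]

private theorem add_mulF (p p' q : ℕ →₀ F) :
    mulF θ (p + p') q = mulF θ p q + mulF θ p' q := by
  unfold mulF
  rw [Finsupp.sum_add_index] <;> simp [add_mul, Finsupp.sum_add]

private theorem mulF_add (p q q' : ℕ →₀ F) :
    mulF θ p (q + q') = mulF θ p q + mulF θ p q' := by
  unfold mulF
  rw [← Finsupp.sum_add]
  refine Finsupp.sum_congr fun i _ => ?_
  rw [Finsupp.sum_add_index] <;> simp [mul_add]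

private theorem single_mulF (i : ℕ) (a : F) (q : ℕ →₀ F) :
    mulF θ (Finsupp.single i a) q
      = q.sum fun j b => Finsupp.single (i + j) (a * (θ ^ i) b) := by
  unfold mulF
  rw [Finsupp.sum_single_index]
  simp

private theorem single_mulF_single (i j : ℕ) (a b : F) :
    mulF θ (Finsupp.single i a) (Finsupp.single j b)
      = Finsupp.single (i + j) (a * (θ ^ i) b) := by
  rw [single_mulF, Finsupp.sum_single_index]
  simp

private theorem mulF_assoc_sss (i j k : ℕ) (a b c : F) :
    mulF θ (mulF θ (Finsupp.single i a) (Finsupp.single j b)) (Finsupp.single k c)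
      = mulF θ (Finsupp.single i a) (mulF θ (Finsupp.single j b) (Finsupp.single k c)) := by
  simp only [single_mulF_single]
  rw [add_assoc, pow_add]
  simp [mul_assoc, aut_mul_apply]

private theorem mulF_assoc_ss (i j : ℕ) (a b : F) (r : ℕ →₀ F) :
    mulF θ (mulF θ (Finsupp.single i a) (Finsupp.single j b)) r
      = mulF θ (Finsupp.single i a) (mulF θ (Finsupp.single j b) r) := by
  induction r using Finsupp.induction with
  | zero => simp [mulF_zero]
  | single_add k c r _ _ ih =>
      rw [mulF_add, mulF_add, mulF_add, ih, mulF_assoc_sss]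

private theorem mulF_assoc_s (i : ℕ) (a : F) (q r : ℕ →₀ F) :
    mulF θ (mulF θ (Finsupp.single i a) q) r
      = mulF θ (Finsupp.single i a) (mulF θ q r) := by
  induction q using Finsupp.induction with
  | zero => simp [mulF_zero, zero_mulF]
  | single_add j b q _ _ ih =>
      rw [mulF_add, add_mulF, add_mulF, mulF_add, ih, mulF_assoc_ss]

private theorem mulF_assoc (p q r : ℕ →₀ F) :
    mulF θ (mulF θ p q) r = mulF θ p (mulF θ q r) := by
  induction p using Finsupp.induction with
  | zero => simp [zero_mulF]
  | single_add i a p _ _ ih =>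
      rw [add_mulF, add_mulF, add_mulF, ih, mulF_assoc_s]

instance instRing : Ring (SkewPoly F θ) :=
  { (inferInstance : AddCommGroup (ℕ →₀ F)), (inferInstance : Mul (SkewPoly F θ)),
    (inferInstance : One (SkewPoly F θ)) with
    mul_assoc := fun p q r => mulF_assoc θ p q r
    one_mul := fun p => by
      show mulF θ (Finsupp.single 0 1) p = p
      erw [single_mulF]
      refine (Finsupp.sum_congr fun i a => ?_).trans (Finsupp.sum_single p)
      simp [aut_one_apply]
    mul_one := fun p => by
      show mulF θ p (Finsupp.single 0 1) = p
      unfold mulF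
      refine (Finsupp.sum_congr fun i a => ?_).trans (Finsupp.sum_single p)
      rw [Finsupp.sum_single_index] <;> simp
    left_distrib := fun p q r => mulF_add θ p q r
    right_distrib := fun p q r => add_mulF θ p q r
    zero_mul := fun p => zero_mulF θ p
    mul_zero := fun p => mulF_zero θ p }

/-- The constant (degree-zero) embedding `F → F[X;θ]`, as a ring homomorphism. -/
def C : F →+* SkewPoly F θ where
  toFun a := (Finsupp.single 0 a : ℕ →₀ F)
  map_one' := rfl
  map_mul' a b := by
    show _ = mulF θ _ _
    rw [single_mulF_single]
    simp [aut_one_apply]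
  map_zero' := by
    show (Finsupp.single 0 (0 : F) : ℕ →₀ F) = 0
    simp
  map_add' a b := by
    show (Finsupp.single 0 (a + b) : ℕ →₀ F) = Finsupp.single 0 a + Finsupp.single 0 b
    exact Finsupp.single_add 0 a b

/-- The indeterminate `X` of the skew polynomial ring. -/
def X : SkewPoly F θ := (Finsupp.single 1 1 : ℕ →₀ F)

/-- The `i`-th coefficient of a skew polynomial. -/
def coeff (p : SkewPoly F θ) (i : ℕ) : F := (show ℕ →₀ F from p) i

/-- Sanity check: the fundamental commutation rule `X * a = θ(a) * X`. -/
theorem X_mul_C (a : F) : X θ * C θ a = C θ (θ a) * X θ := by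
  show mulF θ (Finsupp.single 1 1) (Finsupp.single 0 a)
      = mulF θ (Finsupp.single 0 (θ a)) (Finsupp.single 1 1)
  rw [single_mulF_single, single_mulF_single]
  simp [aut_one_apply, pow_one]

end SkewPoly

/-- The congruence on `F[X;θ]` identifying two skew polynomials iff they differ by an
element of the two-sided ideal generated by `Xⁿ - 1`; its quotient ring is
`F[X;θ]/(Xⁿ - 1)`, and `(skewCyclicCon F θ n).mk'` is the canonical projection `ψ`. -/
def skewCyclicCon (F : Type*) [Ring F] (θ : RingAut F) (n : ℕ) :
    RingCon (SkewPoly F θ) :=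
  (TwoSidedIdeal.span {SkewPoly.X θ ^ n - 1}).ringCon

/-- The skew polynomial representation `a(X) = a₀ + a₁ X + ⋯ + a_{n-1} X^{n-1}` of a
word `a = (a₀, …, a_{n-1}) ∈ F^n`. -/
def wordPoly {F : Type*} [Ring F] (θ : RingAut F) {n : ℕ} (a : Fin n → F) :
    SkewPoly F θ :=
  ∑ i : Fin n, SkewPoly.C θ (a i) * SkewPoly.X θ ^ (i : ℕ)

section Aux

open SkewPoly

variable {F : Type*} [Field F] (θ : RingAut F)

/-- degree-`i` monomial `a Xⁱ` as an element of the skew polynomial ring. -/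
private def sg (i : ℕ) (a : F) : SkewPoly F θ := Finsupp.single i a

private lemma sg_mul (i j : ℕ) (a b : F) :
    sg θ i a * sg θ j b = sg θ (i + j) (a * (θ ^ i) b) :=
  SkewPoly.single_mulF_single θ i j a b

private lemma C_eq_sg (a : F) : SkewPoly.C θ a = sg θ 0 a := rfl

private lemma X_pow_eq_sg (k : ℕ) : SkewPoly.X θ ^ k = sg θ k 1 := by
  induction k with
  | zero => rfl
  | succ k ih =>
      rw [pow_succ, ih]
      show sg θ k 1 * sg θ 1 1 = _
      rw [sg_mul]
      simp [sg]
      rfl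

private lemma C_mul_X_pow (a : F) (i : ℕ) :
    SkewPoly.C θ a * SkewPoly.X θ ^ i = sg θ i a := by
  rw [X_pow_eq_sg, C_eq_sg, sg_mul]
  simp [sg, SkewPoly.aut_one_apply]
  rfl

private lemma wordPoly_eq {n : ℕ} (a : Fin n → F) :
    wordPoly θ a = ∑ i : Fin n, sg θ (i : ℕ) (a i) :=
  Finset.sum_congr rfl fun i _ => C_mul_X_pow θ (a i) i

private lemma coeff_sg (i j : ℕ) (a : F) :
    SkewPoly.coeff θ (sg θ i a) j = if i = j then a else 0 :=
  Finsupp.single_apply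

private lemma coeff_add (p q : SkewPoly F θ) (j : ℕ) :
    SkewPoly.coeff θ (p + q) j = SkewPoly.coeff θ p j + SkewPoly.coeff θ q j :=
  Finsupp.add_apply _ _ _

private lemma coeff_zero (j : ℕ) : SkewPoly.coeff θ (0 : SkewPoly F θ) j = 0 := rfl

/-- `coeff` bundled as an additive monoid hom. -/
private def coeffHom (j : ℕ) : SkewPoly F θ →+ F where
  toFun p := SkewPoly.coeff θ p j
  map_zero' := coeff_zero θ j
  map_add' p q := coeff_add θ p q j

private lemma coeff_sub (p q : SkewPoly F θ) (j : ℕ) :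
    SkewPoly.coeff θ (p - q) j = SkewPoly.coeff θ p j - SkewPoly.coeff θ q j :=
  map_sub (coeffHom θ j) p q

private lemma coeff_sum {ι : Type*} (s : Finset ι) (f : ι → SkewPoly F θ) (j : ℕ) :
    SkewPoly.coeff θ (∑ i ∈ s, f i) j = ∑ i ∈ s, SkewPoly.coeff θ (f i) j :=
  map_sum (coeffHom θ j) f s

private lemma coeff_wordPoly {n : ℕ} (a : Fin n → F) (j : ℕ) :
    SkewPoly.coeff θ (wordPoly θ a) j = if h : j < n then a ⟨j, h⟩ else 0 := by
  rw [wordPoly_eq, coeff_sum]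
  simp only [coeff_sg]
  by_cases h : j < n
  · rw [dif_pos h, Finset.sum_eq_single (⟨j, h⟩ : Fin n)]
    · simp
    · intro i _ hi
      rw [if_neg]
      intro hij
      exact hi (Fin.ext hij)
    · simp
  · rw [dif_neg h]
    apply Finset.sum_eq_zero
    intro i _
    rw [if_neg]
    intro hij
    exact h (hij ▸ i.isLt)

private lemma coeff_wordPoly_ge {n : ℕ} (a : Fin n → F) (m : ℕ) (hm : n ≤ m) :
    SkewPoly.coeff θ (wordPoly θ a) m = 0 := by
  rw [coeff_wordPoly, dif_neg (not_lt.mpr hm)]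

private lemma coeff_mul_X_pow (r : SkewPoly F θ) (n j : ℕ) :
    SkewPoly.coeff θ (r * SkewPoly.X θ ^ n) (j + n) = SkewPoly.coeff θ r j := by
  classical
  rw [X_pow_eq_sg]
  show (SkewPoly.mulF θ r (Finsupp.single n 1)) (j + n) = (show ℕ →₀ F from r) j
  unfold SkewPoly.mulF
  erw [Finsupp.sum_apply]
  have key : ∀ i (a : F), (Finsupp.sum (Finsupp.single n (1:F))
      fun k b => Finsupp.single (i + k) (a * (θ ^ i) b)) (j + n)
      = if i = j then a else 0 := by
    intro i a
    rw [Finsupp.sum_single_index (by simp)]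
    rw [Finsupp.single_apply]
    simp [Nat.add_right_cancel_iff]
  simp only [key]
  unfold Finsupp.sum
  erw [Finset.sum_ite_eq' _ j]
  by_cases hj : j ∈ (show ℕ →₀ F from r).support
  · rw [if_pos hj]
  · rw [if_neg hj, eq_comm]
    exact Finsupp.notMem_support_iff.mp hj

/-- `Xⁿ` is central when `θⁿ = 1`. -/
private lemma X_pow_comm (n : ℕ) (hθ : θ ^ n = 1) (p : SkewPoly F θ) :
    SkewPoly.X θ ^ n * p = p * SkewPoly.X θ ^ n := by
  rw [X_pow_eq_sg]
  have key : ∀ q : ℕ →₀ F,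
      SkewPoly.mulF θ (Finsupp.single n 1) q = SkewPoly.mulF θ q (Finsupp.single n 1) := by
    intro q
    induction q using Finsupp.induction with
    | zero => rw [SkewPoly.mulF_zero, SkewPoly.zero_mulF]
    | single_add i a q _ _ ih =>
        rw [SkewPoly.mulF_add, SkewPoly.add_mulF, ih]
        congr 1
        rw [SkewPoly.single_mulF_single, SkewPoly.single_mulF_single, hθ]
        simp [SkewPoly.aut_one_apply, Nat.add_comm]
  exact key p

private lemma z_comm (n : ℕ) (hθ : θ ^ n = 1) (p : SkewPoly F θ) :
    (SkewPoly.X θ ^ n - 1) * p = p * (SkewPoly.X θ ^ n - 1) := by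
  rw [sub_mul, mul_sub, one_mul, mul_one, X_pow_comm θ n hθ]

private lemma mem_span_z (n : ℕ) (hθ : θ ^ n = 1) (p : SkewPoly F θ) :
    p ∈ TwoSidedIdeal.span {SkewPoly.X θ ^ n - 1} ↔
      ∃ r : SkewPoly F θ, p = r * (SkewPoly.X θ ^ n - 1) := by
  set z : SkewPoly F θ := SkewPoly.X θ ^ n - 1 with hzdef
  constructor
  · intro h
    let J : TwoSidedIdeal (SkewPoly F θ) := TwoSidedIdeal.mk'
      {p | ∃ r, p = r * z}
      ⟨0, (zero_mul z).symm⟩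
      (fun {x y} hx hy => by
        obtain ⟨r1, rfl⟩ := hx; obtain ⟨r2, rfl⟩ := hy
        exact ⟨r1 + r2, (add_mul r1 r2 z).symm⟩)
      (fun {x} hx => by
        obtain ⟨r, rfl⟩ := hx; exact ⟨-r, (neg_mul r z).symm⟩)
      (fun {x y} hy => by
        obtain ⟨r, rfl⟩ := hy; exact ⟨x * r, (mul_assoc x r z).symm⟩)
      (fun {x y} hx => by
        obtain ⟨r, rfl⟩ := hx
        refine ⟨r * y, ?_⟩
        rw [mul_assoc, mul_assoc, ← z_comm θ n hθ y])
    have hJ : ({z} : Set (SkewPoly F θ)) ⊆ (J : Set (SkewPoly F θ)) := by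
      rw [Set.singleton_subset_iff, SetLike.mem_coe]
      rw [show J = _ from rfl, TwoSidedIdeal.mem_mk']
      exact ⟨1, (one_mul z).symm⟩
    have := TwoSidedIdeal.mem_span_iff.mp h J hJ
    rwa [show J = _ from rfl, TwoSidedIdeal.mem_mk'] at this
  · rintro ⟨r, rfl⟩
    exact TwoSidedIdeal.mul_mem_left _ _ _
      (TwoSidedIdeal.subset_span (Set.mem_singleton _))

private lemma mk'_eq_iff (n : ℕ) (p q : SkewPoly F θ) :
    (skewCyclicCon F θ n).mk' p = (skewCyclicCon F θ n).mk' q ↔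
      p - q ∈ TwoSidedIdeal.span {SkewPoly.X θ ^ n - 1} := by
  constructor
  · intro h
    exact (TwoSidedIdeal.rel_iff _ p q).mp ((RingCon.eq _).mp h)
  · intro h
    exact (RingCon.eq _).mpr ((TwoSidedIdeal.rel_iff _ p q).mpr h)

/-- Injectivity of the word-to-quotient map. -/
private lemma wordPoly_inj (n : ℕ) [NeZero n] (hθ : θ ^ n = 1) (a b : Fin n → F)
    (h : (skewCyclicCon F θ n).mk' (wordPoly θ a)
        = (skewCyclicCon F θ n).mk' (wordPoly θ b)) : a = b := by
  classical
  obtain ⟨r, hr⟩ := (mem_span_z θ n hθ _).mp ((mk'_eq_iff θ n _ _).mp h)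
  have hn : 0 < n := Nat.pos_of_ne_zero (NeZero.ne n)
  -- periodicity of coefficients of r
  have key : ∀ j, SkewPoly.coeff θ r j = SkewPoly.coeff θ r (j + n) := by
    intro j
    have h0 : SkewPoly.coeff θ (wordPoly θ a - wordPoly θ b) (j + n) = 0 := by
      rw [coeff_sub, coeff_wordPoly_ge θ a _ (Nat.le_add_left n j),
        coeff_wordPoly_ge θ b _ (Nat.le_add_left n j), sub_self]
    rw [hr, mul_sub, mul_one, coeff_sub, coeff_mul_X_pow] at h0
    exact (sub_eq_zero.mp h0)
  have iter : ∀ k j, SkewPoly.coeff θ r j = SkewPoly.coeff θ r (j + k * n) := by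
    intro k
    induction k with
    | zero => simp
    | succ k ih =>
        intro j
        rw [ih j, key (j + k * n)]
        congr 1
        ring
  have rzero : ∀ j, SkewPoly.coeff θ r j = 0 := by
    intro j
    set N := (show ℕ →₀ F from r).support.sup id + 1 with hN
    rw [iter N j]
    have hout : j + N * n ∉ (show ℕ →₀ F from r).support := by
      intro hmem
      have h1 : j + N * n ≤ (show ℕ →₀ F from r).support.sup id :=
        Finset.le_sup (f := id) hmem
      have h2 : N ≤ N * n := Nat.le_mul_of_pos_right N hn
      omega
    exact Finsupp.notMem_support_iff.mp hout
  have : r = 0 := by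
    apply Finsupp.ext
    intro j
    exact rzero j
  rw [this, zero_mul] at hr
  have hab : wordPoly θ a = wordPoly θ b := sub_eq_zero.mp hr
  funext i
  have := congrArg (fun p => SkewPoly.coeff θ p (i : ℕ)) hab
  simpa [coeff_wordPoly, i.isLt] using this

private lemma wordPoly_zero (n : ℕ) : wordPoly θ (0 : Fin n → F) = 0 := by
  unfold wordPoly
  simp

private lemma wordPoly_add {n : ℕ} (a b : Fin n → F) :
    wordPoly θ (a + b) = wordPoly θ a + wordPoly θ b := by
  unfold wordPoly
  rw [← Finset.sum_add_distrib]
  refine Finset.sum_congr rfl fun i _ => ?_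
  rw [Pi.add_apply, map_add, add_mul]

private lemma C_mul_wordPoly {n : ℕ} (c : F) (a : Fin n → F) :
    SkewPoly.C θ c * wordPoly θ a = wordPoly θ (c • a) := by
  rw [wordPoly_eq, wordPoly_eq, Finset.mul_sum]
  refine Finset.sum_congr rfl fun i _ => ?_
  rw [C_eq_sg, sg_mul]
  simp [SkewPoly.aut_one_apply]

/-- The key shift identity in `F[X;θ]`. -/
private lemma shift_key (m : ℕ) (a : Fin (m + 1) → F) :
    SkewPoly.X θ * wordPoly θ a - wordPoly θ (fun i : Fin (m+1) => θ (a (i - 1)))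
      = SkewPoly.C θ (θ (a (Fin.last m))) * (SkewPoly.X θ ^ (m + 1) - 1) := by
  classical
  have h1 : SkewPoly.X θ * wordPoly θ a
      = ∑ i : Fin (m+1), sg θ (1 + (i : ℕ)) (θ (a i)) := by
    rw [wordPoly_eq, Finset.mul_sum]
    refine Finset.sum_congr rfl fun i _ => ?_
    rw [show SkewPoly.X θ = sg θ 1 1 from rfl, sg_mul]
    simp
  have h2 : wordPoly θ (fun i : Fin (m+1) => θ (a (i - 1)))
      = ∑ i : Fin (m+1), sg θ ((i + 1 : Fin (m+1)) : ℕ) (θ (a i)) := by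
    rw [wordPoly_eq]
    refine (Fintype.sum_equiv (Equiv.addRight (1 : Fin (m+1)))
      (fun i : Fin (m+1) => sg θ ((i + 1 : Fin (m+1)) : ℕ) (θ (a i)))
      (fun j : Fin (m+1) => sg θ (j : ℕ) (θ (a (j - 1)))) fun i => ?_).symm
    simp [add_sub_cancel_right]
  erw [h1, h2, ← Finset.sum_sub_distrib]
  rw [Finset.sum_eq_single (Fin.last m)]
  · rw [Fin.last_add_one]
    rw [mul_sub, mul_one, C_mul_X_pow, C_eq_sg]
    simp [Nat.add_comm]
    rfl
  · intro i _ hi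
    have hlt : i < Fin.last m := Fin.lt_last_iff_ne_last.mpr hi
    rw [Fin.val_add_one_of_lt hlt, Nat.add_comm]
    exact sub_self _
  · simp

private lemma psi_X_mul (m : ℕ) (a : Fin (m + 1) → F) :
    (skewCyclicCon F θ (m+1)).mk' (SkewPoly.X θ * wordPoly θ a)
      = (skewCyclicCon F θ (m+1)).mk' (wordPoly θ (fun i : Fin (m+1) => θ (a (i - 1)))) := by
  rw [mk'_eq_iff, shift_key]
  exact TwoSidedIdeal.mul_mem_left _ _ _
    (TwoSidedIdeal.subset_span (Set.mem_singleton _))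

end Aux

/-- Let `𝒞` be a linear code of length `n` over the finite field `F`
and let `θ` be an automorphism of `F` whose order divides `n`.  Then `𝒞` is
`θ`-cyclic (i.e. stable under the `θ`-twisted cyclic shift) if and only if its skew
polynomial representation `𝒞(X)` is a left ideal of `F[X;θ]/(Xⁿ - 1)`. -/
theorem theta_cyclic_iff_skew_left_ideal
    (F : Type*) [Field F] [Fintype F] (θ : RingAut F) (n : ℕ) [NeZero n]
    (hord : orderOf θ ∣ n) (𝒞 : Submodule F (Fin n → F)) :
    (∀ a ∈ 𝒞, (fun i : Fin n => θ (a (i - 1))) ∈ 𝒞) ↔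
    (∃ I : Ideal (skewCyclicCon F θ n).Quotient,
      (I : Set (skewCyclicCon F θ n).Quotient)
        = (fun a : Fin n → F => (skewCyclicCon F θ n).mk' (wordPoly θ a)) ''
            (𝒞 : Set (Fin n → F))) := by
  classical
  obtain ⟨m, rfl⟩ : ∃ m, n = m + 1 :=
    ⟨n - 1, (Nat.succ_pred_eq_of_pos (Nat.pos_of_ne_zero (NeZero.ne n))).symm⟩
  have hθn : θ ^ (m + 1) = 1 := orderOf_dvd_iff_pow_eq_one.mp hord
  set ψ := (skewCyclicCon F θ (m + 1)).mk' with hψ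
  constructor
  · intro hcyc
    have hXpow : ∀ (i : ℕ), ∀ a ∈ 𝒞, ∃ b ∈ 𝒞,
        ψ (SkewPoly.X θ ^ i * wordPoly θ a) = ψ (wordPoly θ b) := by
      intro i
      induction i with
      | zero => exact fun a ha => ⟨a, ha, by rw [pow_zero, one_mul]⟩
      | succ i ih =>
          intro a ha
          obtain ⟨b, hb, heq⟩ := ih a ha
          refine ⟨fun k => θ (b (k - 1)), hcyc b hb, ?_⟩
          rw [pow_succ', mul_assoc, map_mul, heq, ← map_mul, psi_X_mul]
    have hsing : ∀ (i : ℕ) (c : F), ∀ a ∈ 𝒞, ∃ b ∈ 𝒞,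
        ψ ((sg θ i c) * wordPoly θ a) = ψ (wordPoly θ b) := by
      intro i c a ha
      obtain ⟨b, hb, heq⟩ := hXpow i a ha
      refine ⟨c • b, Submodule.smul_mem 𝒞 c hb, ?_⟩
      rw [← C_mul_X_pow, mul_assoc, map_mul, heq, ← map_mul, C_mul_wordPoly]
    have hmul : ∀ p : ℕ →₀ F, ∀ a ∈ 𝒞, ∃ b ∈ 𝒞,
        ψ ((show SkewPoly F θ from p) * wordPoly θ a) = ψ (wordPoly θ b) := by
      intro p
      induction p using Finsupp.induction with
      | zero =>
          intro a ha
          refine ⟨0, 𝒞.zero_mem, ?_⟩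
          rw [wordPoly_zero]
          show ψ ((0 : SkewPoly F θ) * _) = ψ 0
          rw [zero_mul]
      | single_add i c p _ _ ih =>
          intro a ha
          obtain ⟨b1, hb1, h1⟩ := hsing i c a ha
          obtain ⟨b2, hb2, h2⟩ := ih a ha
          refine ⟨b1 + b2, 𝒞.add_mem hb1 hb2, ?_⟩
          have hsplit : (show SkewPoly F θ from Finsupp.single i c + p)
              = sg θ i c + (show SkewPoly F θ from p) := rfl
          rw [hsplit, add_mul, map_add, h1, h2, ← map_add, wordPoly_add]
    refine ⟨{ carrier := (fun a : Fin (m+1) → F => ψ (wordPoly θ a)) '' 𝒞,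
              add_mem' := ?_, zero_mem' := ?_, smul_mem' := ?_ }, rfl⟩
    · rintro x y ⟨a, ha, rfl⟩ ⟨b, hb, rfl⟩
      refine ⟨a + b, 𝒞.add_mem ha hb, ?_⟩
      show ψ (wordPoly θ (a + b)) = ψ (wordPoly θ a) + ψ (wordPoly θ b)
      rw [wordPoly_add, map_add]
    · refine ⟨0, 𝒞.zero_mem, ?_⟩
      show ψ (wordPoly θ (0 : Fin (m+1) → F)) = 0
      rw [wordPoly_zero, map_zero]
    · rintro q x ⟨a, ha, rfl⟩
      obtain ⟨p, rfl⟩ := Quotient.exists_rep q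
      obtain ⟨b, hb, heq⟩ := hmul p a ha
      refine ⟨b, hb, ?_⟩
      show ψ (wordPoly θ b) = _
      rw [← heq]
      show _ = ψ p * ψ (wordPoly θ a)
      rw [← map_mul]
  · rintro ⟨I, hI⟩ a ha
    have hx : ψ (wordPoly θ a) ∈ I := by
      rw [← SetLike.mem_coe, hI]
      exact ⟨a, ha, rfl⟩
    have hX : ψ (SkewPoly.X θ) • ψ (wordPoly θ a) ∈ I := I.smul_mem _ hx
    rw [smul_eq_mul, ← map_mul, psi_X_mul] at hX
    rw [← SetLike.mem_coe, hI] at hX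
    obtain ⟨b, hb, heq⟩ := hX
    have hba := wordPoly_inj θ (m + 1) hθn b (fun i => θ (a (i - 1))) heq
    rwa [← hba]
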